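/- arXiv:2106.06728 — 5 statements merged into one kernel-verified Lean document; each statement's English description precedes it below -/
import Mathlib

section
/- If a > 0, then the homogenized matrix A* is positive semidefinite, i.e. A*x·x ≥ 0 for every x ∈ ℝ^d. -/
open Matrix

/-!
`A* x ⬝ x` is the energy of a laminate: for every `s`, it is at most
`θ A₁ y₁ ⬝ y₁ + (1 - θ) A₂ y₂ ⬝ y₂` with `y₁ = x + (1 - θ) s e₁`, `y₂ = x - θ s e₁`
(a quadratic in `s` with leading coefficient `θ (1 - θ) a`), with equality at
`s = (A₂ - A₁) e₁ ⬝ x / a`. Both terms are nonnegative since `A₁` and `A₂` are positive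
semidefinite.
-/

namespace Matrix

variable {n R : Type*} [Fintype n]

lemma vecMulVec_mulVec_dotProduct [CommSemiring R] (w v x : n → R) :
    vecMulVec w v *ᵥ x ⬝ᵥ x = (w ⬝ᵥ x) * (v ⬝ᵥ x) := by
  rw [vecMulVec_mulVec, op_smul_eq_smul, smul_dotProduct, smul_eq_mul, mul_comm]

lemma IsSymm.mulVec_dotProduct_comm [CommSemiring R] {A : Matrix n n R} (hA : A.IsSymm)
    (u v : n → R) : A *ᵥ u ⬝ᵥ v = A *ᵥ v ⬝ᵥ u := by
  rw [dotProduct_comm, dotProduct_mulVec, ← mulVec_transpose, hA.eq]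

lemma IsSymm.mulVec_add_smul_dotProduct [CommRing R] {A : Matrix n n R} (hA : A.IsSymm)
    (x e : n → R) (t : R) :
    A *ᵥ (x + t • e) ⬝ᵥ (x + t • e)
      = A *ᵥ x ⬝ᵥ x + 2 * t * (A *ᵥ e ⬝ᵥ x) + t ^ 2 * (A *ᵥ e ⬝ᵥ e) := by
  simp only [mulVec_add, mulVec_smul, add_dotProduct, dotProduct_add, smul_dotProduct,
    dotProduct_smul, smul_eq_mul, hA.mulVec_dotProduct_comm x e]
  ring

lemma PosSemidef.mulVec_dotProduct_self_nonneg [CommRing R] [PartialOrder R] [StarRing R]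
    [TrivialStar R] {A : Matrix n n R} (hA : A.PosSemidef) (x : n → R) :
    0 ≤ A *ᵥ x ⬝ᵥ x := by
  simpa [dotProduct_comm x] using hA.dotProduct_mulVec_nonneg x

lemma laminate_mulVec_dotProduct_self [Field R] {A₁ A₂ : Matrix n n R} (hA₁ : A₁.IsSymm)
    (hA₂ : A₂.IsSymm) {θ a s : R} {e x : n → R}
    (ha : a = (1 - θ) * (A₁ *ᵥ e ⬝ᵥ e) + θ * (A₂ *ᵥ e ⬝ᵥ e)) (ha₀ : a ≠ 0)
    (hs : s = (A₂ - A₁) *ᵥ e ⬝ᵥ x / a) :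
    (θ • A₁ + (1 - θ) • A₂ - (θ * (1 - θ) / a) • vecMulVec ((A₂ - A₁) *ᵥ e) ((A₂ - A₁) *ᵥ e))
        *ᵥ x ⬝ᵥ x
      = θ * (A₁ *ᵥ (x + ((1 - θ) * s) • e) ⬝ᵥ (x + ((1 - θ) * s) • e))
        + (1 - θ) * (A₂ *ᵥ (x + (-θ * s) • e) ⬝ᵥ (x + (-θ * s) • e)) := by
  subst ha hs
  rw [hA₁.mulVec_add_smul_dotProduct, hA₂.mulVec_add_smul_dotProduct]
  simp only [sub_mulVec, add_mulVec, smul_mulVec, sub_dotProduct, add_dotProduct,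
    smul_dotProduct, smul_eq_mul, vecMulVec_mulVec_dotProduct]
  field_simp
  ring

end Matrix

/-- If `a > 0`, the homogenized matrix `A*` of a rank-one laminate with
symmetric positive semidefinite phases `A₁, A₂` is positive semidefinite. -/
theorem homogenized_matrix_nonneg
    (d : ℕ) (θ : ℝ) (hθ : θ ∈ Set.Ioo (0 : ℝ) 1)
    (A₁ A₂ : Matrix (Fin d) (Fin d) ℝ)
    (hA₁ : A₁.PosSemidef) (hA₂ : A₂.PosSemidef)
    (e₁ : Fin d → ℝ)
    (a : ℝ)
    (ha_def : a = (1 - θ) * (A₁.mulVec e₁ ⬝ᵥ e₁) + θ * (A₂.mulVec e₁ ⬝ᵥ e₁))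
    (ha : 0 < a)
    (Astar : Matrix (Fin d) (Fin d) ℝ)
    (hAstar : Astar = θ • A₁ + (1 - θ) • A₂
      - (θ * (1 - θ) / a) • vecMulVec ((A₂ - A₁).mulVec e₁) ((A₂ - A₁).mulVec e₁)) :
    ∀ x : Fin d → ℝ, 0 ≤ Astar.mulVec x ⬝ᵥ x := by
  intro x
  obtain ⟨hθ₀, hθ₁⟩ := hθ
  rw [hAstar, laminate_mulVec_dotProduct_self (isHermitian_iff_isSymm.mp hA₁.isHermitian)
    (isHermitian_iff_isSymm.mp hA₂.isHermitian) ha_def ha.ne' rfl]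
  exact add_nonneg (mul_nonneg hθ₀.le (hA₁.mulVec_dotProduct_self_nonneg _))
    (mul_nonneg (sub_nonneg.mpr hθ₁.le) (hA₂.mulVec_dotProduct_self_nonneg _))
end

section
/- If a > 0, then for every x ∈ ℝ^d one has the lower bound A*x·x ≥ a^{−1} ( θ (A₂e₁·e₁)^{1/2} (A₁x·x)^{1/2} − (1−θ) (A₁e₁·e₁)^{1/2} (A₂x·x)^{1/2} )². -/
/-!
Write `αᵢ = Aᵢe₁·e₁`, `qᵢ = Aᵢx·x` and `b = (A₂ − A₁)e₁·x`, so that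
`A*x·x = θ q₁ + (1 − θ) q₂ − θ(1 − θ) b² / a`. Cauchy–Schwarz for the semi-inner products
`(u, v) ↦ Aᵢu·v` gives `|b| ≤ √α₁ √q₁ + √α₂ √q₂`, and when `|b|` equals this bound the right-hand
side of the expansion is exactly `a⁻¹ (θ √α₂ √q₁ − (1 − θ) √α₁ √q₂)²`, because
`a = (1 − θ) α₁ + θ α₂`.
-/

open Matrix

namespace Matrix.PosSemidef

variable {n : Type*} [Fintype n] {A : Matrix n n ℝ}

theorem mulVec_dotProduct_self_nonneg_s2 (hA : A.PosSemidef) (x : n → ℝ) : 0 ≤ A *ᵥ x ⬝ᵥ x :=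
  (hA.dotProduct_mulVec_nonneg x).trans_eq (dotProduct_comm _ _)

theorem mulVec_dotProduct_sq_le (hA : A.PosSemidef) (u v : n → ℝ) :
    (A *ᵥ u ⬝ᵥ v) ^ 2 ≤ (A *ᵥ u ⬝ᵥ u) * (A *ᵥ v ⬝ᵥ v) := by
  let := A.toSeminormedAddCommGroup hA
  let := A.toInnerProductSpace hA
  rw [sq, mul_comm (A *ᵥ u ⬝ᵥ u)]
  exact real_inner_mul_inner_self_le v u

theorem abs_mulVec_dotProduct_le (hA : A.PosSemidef) (u v : n → ℝ) :
    |A *ᵥ u ⬝ᵥ v| ≤ √(A *ᵥ u ⬝ᵥ u) * √(A *ᵥ v ⬝ᵥ v) := by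
  rw [← Real.sqrt_mul (hA.mulVec_dotProduct_self_nonneg_s2 u)]
  exact Real.abs_le_sqrt (hA.mulVec_dotProduct_sq_le u v)

end Matrix.PosSemidef

theorem Matrix.vecMulVec_mulVec_dotProduct_s2 {n : Type*} [Fintype n] (w v x : n → ℝ) :
    vecMulVec w v *ᵥ x ⬝ᵥ x = (w ⬝ᵥ x) * (v ⬝ᵥ x) := by
  rw [vecMulVec_mulVec, op_smul_eq_smul, smul_dotProduct, smul_eq_mul, mul_comm]

theorem inv_mul_sq_sub_eq {θ s₁ s₂ t₁ t₂ a : ℝ} (ha_def : a = (1 - θ) * s₁ ^ 2 + θ * s₂ ^ 2)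
    (ha : a ≠ 0) :
    a⁻¹ * (θ * s₂ * t₁ - (1 - θ) * s₁ * t₂) ^ 2
      = θ * t₁ ^ 2 + (1 - θ) * t₂ ^ 2 - θ * (1 - θ) / a * (s₁ * t₁ + s₂ * t₂) ^ 2 := by
  field_simp
  rw [ha_def]
  ring

theorem inv_mul_sq_sqrt_sub_le {θ α₁ α₂ q₁ q₂ a b : ℝ} (hθ₀ : 0 ≤ θ) (hθ₁ : θ ≤ 1)
    (hα₁ : 0 ≤ α₁) (hα₂ : 0 ≤ α₂) (hq₁ : 0 ≤ q₁) (hq₂ : 0 ≤ q₂)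
    (ha_def : a = (1 - θ) * α₁ + θ * α₂) (ha : 0 < a)
    (hb : |b| ≤ √α₁ * √q₁ + √α₂ * √q₂) :
    a⁻¹ * (θ * √α₂ * √q₁ - (1 - θ) * √α₁ * √q₂) ^ 2
      ≤ θ * q₁ + (1 - θ) * q₂ - θ * (1 - θ) / a * b ^ 2 := by
  have ha_def' : a = (1 - θ) * √α₁ ^ 2 + θ * √α₂ ^ 2 := by
    rw [Real.sq_sqrt hα₁, Real.sq_sqrt hα₂, ha_def]
  have hb_sq : b ^ 2 ≤ (√α₁ * √q₁ + √α₂ * √q₂) ^ 2 := sq_le_sq' (abs_le.mp hb).1 (abs_le.mp hb).2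
  have hcoeff : 0 ≤ θ * (1 - θ) / a := div_nonneg (mul_nonneg hθ₀ (sub_nonneg.mpr hθ₁)) ha.le
  rw [inv_mul_sq_sub_eq ha_def' ha.ne', Real.sq_sqrt hq₁, Real.sq_sqrt hq₂]
  gcongr

/-- If `a > 0`, the homogenized matrix `A*` satisfies the lower bound
`A*x·x ≥ a⁻¹ (θ (A₂e₁·e₁)^{1/2} (A₁x·x)^{1/2} − (1−θ) (A₁e₁·e₁)^{1/2} (A₂x·x)^{1/2})²`. -/
theorem homogenized_matrix_lower_bound
    (d : ℕ) (θ : ℝ) (hθ : θ ∈ Set.Ioo (0 : ℝ) 1)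
    (A₁ A₂ : Matrix (Fin d) (Fin d) ℝ)
    (hA₁ : A₁.PosSemidef) (hA₂ : A₂.PosSemidef)
    (e₁ : Fin d → ℝ)
    (a : ℝ)
    (ha_def : a = (1 - θ) * (A₁.mulVec e₁ ⬝ᵥ e₁) + θ * (A₂.mulVec e₁ ⬝ᵥ e₁))
    (ha : 0 < a)
    (Astar : Matrix (Fin d) (Fin d) ℝ)
    (hAstar : Astar = θ • A₁ + (1 - θ) • A₂
      - (θ * (1 - θ) / a) • vecMulVec ((A₂ - A₁).mulVec e₁) ((A₂ - A₁).mulVec e₁)) :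
    ∀ x : Fin d → ℝ,
      a⁻¹ * (θ * Real.sqrt (A₂.mulVec e₁ ⬝ᵥ e₁) * Real.sqrt (A₁.mulVec x ⬝ᵥ x)
        - (1 - θ) * Real.sqrt (A₁.mulVec e₁ ⬝ᵥ e₁) * Real.sqrt (A₂.mulVec x ⬝ᵥ x)) ^ 2
      ≤ Astar.mulVec x ⬝ᵥ x := by
  intro x
  have hb : |(A₂ - A₁) *ᵥ e₁ ⬝ᵥ x|
      ≤ √(A₁ *ᵥ e₁ ⬝ᵥ e₁) * √(A₁ *ᵥ x ⬝ᵥ x) + √(A₂ *ᵥ e₁ ⬝ᵥ e₁) * √(A₂ *ᵥ x ⬝ᵥ x) := by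
    rw [sub_mulVec, sub_dotProduct]
    linarith [abs_sub (A₂ *ᵥ e₁ ⬝ᵥ x) (A₁ *ᵥ e₁ ⬝ᵥ x),
      hA₁.abs_mulVec_dotProduct_le e₁ x, hA₂.abs_mulVec_dotProduct_le e₁ x]
  have hquad : Astar *ᵥ x ⬝ᵥ x = θ * (A₁ *ᵥ x ⬝ᵥ x) + (1 - θ) * (A₂ *ᵥ x ⬝ᵥ x)
      - θ * (1 - θ) / a * ((A₂ - A₁) *ᵥ e₁ ⬝ᵥ x) ^ 2 := by
    simp only [hAstar, sub_mulVec, add_mulVec, smul_mulVec, sub_dotProduct, add_dotProduct,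
      smul_dotProduct, vecMulVec_mulVec_dotProduct_s2, smul_eq_mul, sq]
  rw [hquad]
  exact inv_mul_sq_sqrt_sub_le hθ.1.le hθ.2.le (hA₁.mulVec_dotProduct_self_nonneg_s2 e₁)
    (hA₂.mulVec_dotProduct_self_nonneg_s2 e₁) (hA₁.mulVec_dotProduct_self_nonneg_s2 x)
    (hA₂.mulVec_dotProduct_self_nonneg_s2 x) ha_def ha hb
end

section
/- Let θ ∈ (0,1), let η₁, η₂ ∈ ℝ³ be such that {e₁, η₁, η₂} are linearly independent in ℝ³, and let E := {(ξ₁, ξ₂) ∈ ℝ³ × ℝ³ : (ξ₁ − ξ₂)·e₁ = 0, ξ₁·η₁ = 0, ξ₂·η₂ = 0}. Then the linear map g : E → ℝ³ defined by g(ξ₁, ξ₂) := θξ₁ + (1−θ)ξ₂ is bijective; in particular, for every N ∈ ℝ³ there exists a unique pair (ξ₁, ξ₂) ∈ E with θξ₁ + (1−θ)ξ₂ = N. -/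
/-!
Given `N`, the constraint `θ • ξ₁ + (1 - θ) • ξ₂ = N` determines `ξ₂ = (N - θ • ξ₁) / (1 - θ)`,
and the three constraints defining `E` then become three linear conditions on `ξ₁` alone:
`ξ₁ ⬝ᵥ e₁ = N ⬝ᵥ e₁`, `ξ₁ ⬝ᵥ η₁ = 0` and `θ * (ξ₁ ⬝ᵥ η₂) = N ⬝ᵥ η₂`. As `e₁, η₁, η₂` are
linearly independent, the matrix with these rows is invertible, so `ξ₁` exists and is unique.
-/

open Matrix

theorem existsUnique_dotProduct_eq_of_linearIndependent {K ι : Type*} [Field K] [Fintype ι]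
    [DecidableEq ι] {v : ι → ι → K} (hv : LinearIndependent K v) (c : ι → K) :
    ∃! x : ι → K, ∀ i, x ⬝ᵥ v i = c i := by
  have hM : IsUnit (of v) := linearIndependent_rows_iff_isUnit.1 hv
  have hbij : Function.Bijective (of v).mulVec :=
    ⟨mulVec_injective_iff_isUnit.2 hM, mulVec_surjective_iff_isUnit.2 hM⟩
  simpa [funext_iff, mulVec, dotProduct_comm] using hbij.existsUnique c

theorem Prod.existsUnique_snd_eq {α β : Type*} {P : α → Prop} (f : α → β) (h : ∃! a, P a) :
    ∃! p : α × β, P p.1 ∧ p.2 = f p.1 := by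
  obtain ⟨a, ha, huniq⟩ := h
  refine ⟨(a, f a), ⟨ha, rfl⟩, fun p ⟨hp, hp₂⟩ => ?_⟩
  have hp₁ : p.1 = a := huniq p.1 hp
  exact Prod.ext hp₁ (hp₂.trans (congrArg f hp₁))

theorem Set.bijOn_univ_of_existsUnique {α β : Type*} {f : α → β} {s : Set α}
    (h : ∀ b, ∃! a, a ∈ s ∧ f a = b) : Set.BijOn f s Set.univ := by
  refine ⟨Set.mapsTo_univ f s, fun a ha a' ha' heq => ?_, fun b _ => ?_⟩
  · exact (h (f a)).unique ⟨ha, rfl⟩ ⟨ha', heq.symm⟩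
  · obtain ⟨a, ⟨ha, rfl⟩, -⟩ := h b
    exact Set.mem_image_of_mem f ha

theorem constraints_and_average_eq_iff {K ι : Type*} [Field K] [Fintype ι] {θ : K} (hθ₀ : θ ≠ 0)
    (hθ₁ : 1 - θ ≠ 0) (a b c N ξ₁ ξ₂ : ι → K) :
    ((ξ₁ - ξ₂) ⬝ᵥ a = 0 ∧ ξ₁ ⬝ᵥ b = 0 ∧ ξ₂ ⬝ᵥ c = 0) ∧ θ • ξ₁ + (1 - θ) • ξ₂ = N ↔
      (ξ₁ ⬝ᵥ a = N ⬝ᵥ a ∧ ξ₁ ⬝ᵥ b = 0 ∧ ξ₁ ⬝ᵥ c = θ⁻¹ * (N ⬝ᵥ c)) ∧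
        ξ₂ = (1 - θ)⁻¹ • (N - θ • ξ₁) := by
  have hξ₂ : θ • ξ₁ + (1 - θ) • ξ₂ = N ↔ ξ₂ = (1 - θ)⁻¹ • (N - θ • ξ₁) := by
    rw [eq_inv_smul_iff₀ hθ₁, eq_sub_iff_add_eq']
  rw [hξ₂]
  refine and_congr_left fun h => ?_
  subst h
  simp only [sub_dotProduct, smul_dotProduct, smul_eq_mul]
  field_simp
  constructor <;> rintro ⟨h₁, h₂, h₃⟩
  · exact ⟨by linear_combination h₁, h₂, by linear_combination -h₃⟩
  · exact ⟨by linear_combination h₁, h₂, by linear_combination -h₃⟩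

theorem average_map_bijective_on_E_general
    (θ : ℝ) (hθ : θ ∈ Set.Ioo (0 : ℝ) 1)
    (e₁ : Fin 3 → ℝ)
    (η₁ η₂ : Fin 3 → ℝ)
    (hind : LinearIndependent ℝ ![e₁, η₁, η₂])
    (E : Set ((Fin 3 → ℝ) × (Fin 3 → ℝ)))
    (hE : E = {p : (Fin 3 → ℝ) × (Fin 3 → ℝ) |
      (p.1 - p.2) ⬝ᵥ e₁ = 0 ∧ p.1 ⬝ᵥ η₁ = 0 ∧ p.2 ⬝ᵥ η₂ = 0}) :
    Set.BijOn (fun p : (Fin 3 → ℝ) × (Fin 3 → ℝ) => θ • p.1 + (1 - θ) • p.2) E Set.univ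
    ∧ ∀ N : Fin 3 → ℝ, ∃! p : (Fin 3 → ℝ) × (Fin 3 → ℝ),
        p ∈ E ∧ θ • p.1 + (1 - θ) • p.2 = N := by
  have hθ₀ : θ ≠ 0 := hθ.1.ne'
  have hθ₁ : 1 - θ ≠ 0 := sub_ne_zero.2 hθ.2.ne'
  have huniq (N : Fin 3 → ℝ) : ∃! p : (Fin 3 → ℝ) × (Fin 3 → ℝ),
      p ∈ E ∧ θ • p.1 + (1 - θ) • p.2 = N := by
    have hξ₁ := existsUnique_dotProduct_eq_of_linearIndependent hind
      ![N ⬝ᵥ e₁, 0, θ⁻¹ * (N ⬝ᵥ η₂)]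
    simp only [Fin.forall_fin_succ, IsEmpty.forall_iff, and_true, cons_val_zero,
      cons_val_succ] at hξ₁
    subst hE
    simpa only [Set.mem_ofPred_eq, constraints_and_average_eq_iff hθ₀ hθ₁] using
      Prod.existsUnique_snd_eq (fun ξ₁ => (1 - θ)⁻¹ • (N - θ • ξ₁)) hξ₁
  exact ⟨Set.bijOn_univ_of_existsUnique huniq, huniq⟩

/-- If `{e₁, η₁, η₂}` are linearly independent in `ℝ³` and
`E = {(ξ₁,ξ₂) : (ξ₁−ξ₂)·e₁ = 0, ξ₁·η₁ = 0, ξ₂·η₂ = 0}`, then the map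
`g(ξ₁,ξ₂) = θξ₁ + (1−θ)ξ₂` is a bijection from `E` onto `ℝ³`; in particular every
`N ∈ ℝ³` is attained by a unique pair `(ξ₁,ξ₂) ∈ E`. -/
theorem average_map_bijective_on_E
    (θ : ℝ) (hθ : θ ∈ Set.Ioo (0 : ℝ) 1)
    (e₁ : Fin 3 → ℝ) (he₁ : e₁ = Pi.single 0 1)
    (η₁ η₂ : Fin 3 → ℝ)
    (hind : LinearIndependent ℝ ![e₁, η₁, η₂])
    (E : Set ((Fin 3 → ℝ) × (Fin 3 → ℝ)))
    (hE : E = {p : (Fin 3 → ℝ) × (Fin 3 → ℝ) |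
      (p.1 - p.2) ⬝ᵥ e₁ = 0 ∧ p.1 ⬝ᵥ η₁ = 0 ∧ p.2 ⬝ᵥ η₂ = 0}) :
    Set.BijOn (fun p : (Fin 3 → ℝ) × (Fin 3 → ℝ) => θ • p.1 + (1 - θ) • p.2) E Set.univ
    ∧ ∀ N : Fin 3 → ℝ, ∃! p : (Fin 3 → ℝ) × (Fin 3 → ℝ),
        p ∈ E ∧ θ • p.1 + (1 - θ) • p.2 = N :=
  average_map_bijective_on_E_general θ hθ e₁ η₁ η₂ hind E hE
end

section
/- Let a > 0 and let b : [0,1] → ℝ be continuous. Then the function u(x) := ∫₀¹ G(x,s) b(s) ds is twice continuously differentiable on [0,1], satisfies the Sturm–Liouville equation −a u''(x) + u(x) = b(x) for all x ∈ (0,1), and satisfies the Dirichlet boundary conditions u(0) = u(1) = 0. -/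
/-!
With `r = √a`, splitting the integral at `s = x` gives
`u(x) = (sinh((1-x)/r) A(x) + sinh(x/r) B(x)) / (r sinh(1/r))`, where
`A(x) = ∫₀ˣ sinh(s/r) b(s) ds` and `B(x) = ∫ₓ¹ sinh((1-s)/r) b(s) ds`. By the fundamental theorem
of calculus the terms `A'` and `B'` cancel in `u'`, while in `u''` they combine, through the addition
formula `sinh((1-x)/r) cosh(x/r) + cosh((1-x)/r) sinh(x/r) = sinh(1/r)`, into `-b(x)/r²`; the rest
of `u''` is `u/r²`.
-/

open Real Set

theorem ContinuousOn.exists_continuous_eqOn_Icc {α β : Type*} [LinearOrder α] [TopologicalSpace α]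
    [OrderTopology α] [TopologicalSpace β] {f : α → β} {lo hi : α} (h : lo ≤ hi)
    (hf : ContinuousOn f (Icc lo hi)) : ∃ g : α → β, Continuous g ∧ EqOn g f (Icc lo hi) :=
  ⟨IccExtend h ((Icc lo hi).domRestrict f),
    (continuousOn_iff_continuous_domRestrict.mp hf).Icc_extend',
    fun _ hx => IccExtend_of_mem h _ hx⟩

namespace SturmLiouville

noncomputable def greenKernel (r x s : ℝ) : ℝ :=
  1 / (r * sinh (1 / r)) * sinh (min x s / r) * sinh ((1 - max x s) / r)

variable (r : ℝ) (b : ℝ → ℝ)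

noncomputable def leftIntegral (x : ℝ) : ℝ := ∫ s in 0..x, sinh (s / r) * b s

noncomputable def rightIntegral (x : ℝ) : ℝ := ∫ s in x..1, sinh ((1 - s) / r) * b s

noncomputable def greenSolution (x : ℝ) : ℝ :=
  (sinh ((1 - x) / r) * leftIntegral r b x + sinh (x / r) * rightIntegral r b x) /
    (r * sinh (1 / r))

noncomputable def greenSolutionDeriv (x : ℝ) : ℝ :=
  (cosh (x / r) * rightIntegral r b x - cosh ((1 - x) / r) * leftIntegral r b x) /
    (r ^ 2 * sinh (1 / r))

@[simp] theorem greenSolution_zero : greenSolution r b 0 = 0 := by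
  simp [greenSolution, leftIntegral]

@[simp] theorem greenSolution_one : greenSolution r b 1 = 0 := by
  simp [greenSolution, rightIntegral]

variable {r b}

theorem integral_greenKernel_mul (hb : Continuous b) {x : ℝ} (hx : x ∈ Icc (0 : ℝ) 1) :
    ∫ s in 0..1, greenKernel r x s * b s = greenSolution r b x := by
  have hG : Continuous fun s => greenKernel r x s * b s := by
    unfold greenKernel; fun_prop
  rw [← intervalIntegral.integral_add_adjacent_intervals (hG.intervalIntegrable 0 x)
    (hG.intervalIntegrable x 1)]
  have hleft : ∫ s in 0..x, greenKernel r x s * b s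
      = sinh ((1 - x) / r) / (r * sinh (1 / r)) * leftIntegral r b x := by
    rw [leftIntegral, ← intervalIntegral.integral_const_mul]
    refine intervalIntegral.integral_congr fun s hs => ?_
    rw [uIcc_of_le hx.1] at hs
    simp only [greenKernel, min_eq_right hs.2, max_eq_left hs.2]
    ring
  have hright : ∫ s in x..1, greenKernel r x s * b s
      = sinh (x / r) / (r * sinh (1 / r)) * rightIntegral r b x := by
    rw [rightIntegral, ← intervalIntegral.integral_const_mul]
    refine intervalIntegral.integral_congr fun s hs => ?_
    rw [uIcc_of_le hx.2] at hs
    simp only [greenKernel, min_eq_left hs.1, max_eq_right hs.1]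
    ring
  rw [hleft, hright, greenSolution]
  ring

theorem hasDerivAt_leftIntegral (hb : Continuous b) (x : ℝ) :
    HasDerivAt (leftIntegral r b) (sinh (x / r) * b x) x :=
  (Continuous.integral_hasStrictDerivAt (by fun_prop) 0 x).hasDerivAt

theorem hasDerivAt_rightIntegral (hb : Continuous b) (x : ℝ) :
    HasDerivAt (rightIntegral r b) (-(sinh ((1 - x) / r) * b x)) x := by
  have hf : Continuous fun s => sinh ((1 - s) / r) * b s := by fun_prop
  exact intervalIntegral.integral_hasDerivAt_left (hf.intervalIntegrable _ _)
    (hf.stronglyMeasurableAtFilter _ _) hf.continuousAt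

theorem hasDerivAt_greenSolution (hb : Continuous b) (x : ℝ) :
    HasDerivAt (greenSolution r b) (greenSolutionDeriv r b x) x := by
  have hsl : HasDerivAt (fun x => sinh ((1 - x) / r)) (cosh ((1 - x) / r) * (-1 / r)) x := by
    simpa using (((hasDerivAt_id x).const_sub 1).div_const r).sinh
  have hsr : HasDerivAt (fun x => sinh (x / r)) (cosh (x / r) * (1 / r)) x := by
    simpa using ((hasDerivAt_id x).div_const r).sinh
  refine (((hsl.mul (hasDerivAt_leftIntegral hb x)).add
    (hsr.mul (hasDerivAt_rightIntegral hb x))).div_const _).congr_deriv ?_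
  rw [greenSolutionDeriv]
  ring

theorem hasDerivAt_greenSolutionDeriv (hr : r ≠ 0) (hb : Continuous b) (x : ℝ) :
    HasDerivAt (greenSolutionDeriv r b) ((greenSolution r b x - b x) / r ^ 2) x := by
  have hcl : HasDerivAt (fun x => cosh ((1 - x) / r)) (sinh ((1 - x) / r) * (-1 / r)) x := by
    simpa using (((hasDerivAt_id x).const_sub 1).div_const r).cosh
  have hcr : HasDerivAt (fun x => cosh (x / r)) (sinh (x / r) * (1 / r)) x := by
    simpa using ((hasDerivAt_id x).div_const r).cosh
  have hsinh : sinh (1 / r) ≠ 0 := by simpa using hr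
  have haddition : sinh ((1 - x) / r) * cosh (x / r) + cosh ((1 - x) / r) * sinh (x / r)
      = sinh (1 / r) := by
    rw [← sinh_add]; ring_nf
  refine (((hcr.mul (hasDerivAt_rightIntegral hb x)).sub
    (hcl.mul (hasDerivAt_leftIntegral hb x))).div_const _).congr_deriv ?_
  rw [greenSolution]
  field_simp
  linear_combination (-r * b x) * haddition

theorem deriv_greenSolution (hb : Continuous b) :
    deriv (greenSolution r b) = greenSolutionDeriv r b :=
  funext fun x => (hasDerivAt_greenSolution hb x).deriv

theorem deriv_greenSolutionDeriv (hr : r ≠ 0) (hb : Continuous b) :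
    deriv (greenSolutionDeriv r b) = fun x => (greenSolution r b x - b x) / r ^ 2 :=
  funext fun x => (hasDerivAt_greenSolutionDeriv hr hb x).deriv

theorem contDiff_greenSolution (hr : r ≠ 0) (hb : Continuous b) :
    ContDiff ℝ 2 (greenSolution r b) := by
  have hv : Differentiable ℝ (greenSolution r b) := fun x =>
    (hasDerivAt_greenSolution hb x).differentiableAt
  have hw : Differentiable ℝ (greenSolutionDeriv r b) := fun x =>
    (hasDerivAt_greenSolutionDeriv hr hb x).differentiableAt
  rw [show (2 : WithTop ℕ∞) = 1 + 1 from rfl, contDiff_succ_iff_deriv, deriv_greenSolution hb,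
    contDiff_one_iff_deriv, deriv_greenSolutionDeriv hr hb]
  exact ⟨hv, by simp, hw, (hv.continuous.sub hb).div_const _⟩

theorem greenSolution_sturmLiouville (hr : r ≠ 0) (hb : Continuous b) (x : ℝ) :
    -r ^ 2 * deriv (deriv (greenSolution r b)) x + greenSolution r b x = b x := by
  rw [deriv_greenSolution hb, deriv_greenSolutionDeriv hr hb]
  field_simp
  ring

end SturmLiouville

open SturmLiouville Filter Topology

/-- The Green representation `u(x) = ∫₀¹ G(x,s)b(s)ds` solves the Sturm–Liouville
problem `−a u'' + u = b` on `(0,1)` with Dirichlet boundary conditions, and `u` is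
twice continuously differentiable on `[0,1]`. -/
theorem green_representation_solves_SL
    (a : ℝ) (ha : 0 < a)
    (b : ℝ → ℝ) (hb : ContinuousOn b (Icc (0 : ℝ) 1))
    (G : ℝ → ℝ → ℝ)
    (hG : ∀ x s : ℝ, G x s =
      (1 / (Real.sqrt a * Real.sinh (1 / Real.sqrt a)))
        * Real.sinh (min x s / Real.sqrt a)
        * Real.sinh ((1 - max x s) / Real.sqrt a))
    (u : ℝ → ℝ) (hu : ∀ x : ℝ, u x = ∫ s in (0:ℝ)..1, G x s * b s) :
    ContDiffOn ℝ 2 u (Icc (0 : ℝ) 1)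
    ∧ (∀ x ∈ Ioo (0 : ℝ) 1, -a * deriv (deriv u) x + u x = b x)
    ∧ u 0 = 0 ∧ u 1 = 0 := by
  obtain ⟨c, hc, hcb⟩ := hb.exists_continuous_eqOn_Icc zero_le_one
  have hr : √a ≠ 0 := (sqrt_pos.mpr ha).ne'
  have hG' : G = greenKernel √a := funext fun x => funext (hG x)
  have huv : EqOn u (greenSolution √a c) (Icc 0 1) := fun x hx => by
    rw [hu, hG', ← integral_greenKernel_mul hc hx]
    refine intervalIntegral.integral_congr fun s hs => ?_
    rw [uIcc_of_le zero_le_one] at hs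
    rw [hcb hs]
  refine ⟨(contDiff_greenSolution hr hc).contDiffOn.congr huv, fun x hx => ?_,
    by simpa using huv (left_mem_Icc.mpr zero_le_one),
    by simpa using huv (right_mem_Icc.mpr zero_le_one)⟩
  have hev : u =ᶠ[𝓝 x] greenSolution √a c := eventuallyEq_of_mem (Icc_mem_nhds hx.1 hx.2) huv
  have hode := greenSolution_sturmLiouville hr hc x
  rw [sq_sqrt ha.le] at hode
  rw [hev.deriv.deriv_eq, huv (Ioo_subset_Icc_self hx), ← hcb (Ioo_subset_Icc_self hx)]
  exact hode
end

section
/- Let d = 2, A₁ := e₂ ⊗ e₂ and A₂ := I₂, where e₂ is the second standard basis vector and I₂ the 2×2 identity matrix. Then a = θ > 0 and the homogenized matrix A* satisfies A*e₁·e₁ = 0; in particular A* is positive semidefinite but not positive definite. -/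
open Matrix

/-!
Since `A₁e₁·e₁ = (e₂·e₁)² = 0` and `A₂e₁·e₁ = 1`, one gets `a = θ`, and `(A₂ - A₁)e₁ = e₁`.
The correction term is then `(1 - θ) e₁ ⊗ e₁`, which cancels the `e₁`-part of `(1 - θ) I₂`;
hence `A* = θ e₂ ⊗ e₂ + (1 - θ) e₂ ⊗ e₂ = e₂ ⊗ e₂`, a rank-one projector killing `e₁`.
-/

theorem dotProduct_mulVec_vecMulVec_self {n R : Type*} [Fintype n] [CommSemiring R]
    (u x : n → R) : vecMulVec u u *ᵥ x ⬝ᵥ x = (u ⬝ᵥ x) ^ 2 := by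
  rw [vecMulVec_mulVec, op_smul_eq_smul, smul_dotProduct, smul_eq_mul, sq]

theorem not_posDef_of_mulVec_dotProduct_eq_zero {n : Type*} [Fintype n] {A : Matrix n n ℝ}
    {x : n → ℝ} (hx : x ≠ 0) (h : A *ᵥ x ⬝ᵥ x = 0) : ¬A.PosDef := fun hA => by
  have := hA.dotProduct_mulVec_pos hx
  rw [star_trivial, dotProduct_comm, h] at this
  exact lt_irrefl 0 this

theorem one_eq_vecMulVec_single_zero_add_vecMulVec_single_one {R : Type*} [CommSemiring R] :
    (1 : Matrix (Fin 2) (Fin 2) R) =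
      vecMulVec (Pi.single 0 1) (Pi.single 0 1) + vecMulVec (Pi.single 1 1) (Pi.single 1 1) := by
  ext i j
  fin_cases i <;> fin_cases j <;> simp [vecMulVec_apply]

/-- Counter-example: for `A₁ = e₂ ⊗ e₂` and `A₂ = I₂`, one has `a = θ > 0`,
`A*e₁·e₁ = 0`, and `A*` is positive semidefinite but not positive definite. -/
theorem counterexample_not_posDef
    (θ : ℝ) (hθ : θ ∈ Set.Ioo (0 : ℝ) 1)
    (e₁ e₂ : Fin 2 → ℝ) (he₁ : e₁ = Pi.single 0 1) (he₂ : e₂ = Pi.single 1 1)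
    (A₁ A₂ : Matrix (Fin 2) (Fin 2) ℝ)
    (hA₁ : A₁ = vecMulVec e₂ e₂) (hA₂ : A₂ = 1)
    (a : ℝ)
    (ha_def : a = (1 - θ) * (A₁.mulVec e₁ ⬝ᵥ e₁) + θ * (A₂.mulVec e₁ ⬝ᵥ e₁))
    (Astar : Matrix (Fin 2) (Fin 2) ℝ)
    (hAstar : Astar = θ • A₁ + (1 - θ) • A₂
      - (θ * (1 - θ) / a) • vecMulVec ((A₂ - A₁).mulVec e₁) ((A₂ - A₁).mulVec e₁)) :
    a = θ ∧ 0 < a ∧ Astar.mulVec e₁ ⬝ᵥ e₁ = 0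
    ∧ Astar.PosSemidef ∧ ¬ Astar.PosDef := by
  have he₂₁ : e₂ ⬝ᵥ e₁ = 0 := by simp [he₁, he₂]
  have he₁₁ : e₁ ⬝ᵥ e₁ = 1 := by simp [he₁]
  have ha : a = θ := by
    rw [ha_def, hA₁, hA₂, dotProduct_mulVec_vecMulVec_self, he₂₁, one_mulVec, he₁₁]
    ring
  have hcontrast : (A₂ - A₁) *ᵥ e₁ = e₁ := by
    rw [hA₁, hA₂, sub_mulVec, one_mulVec, vecMulVec_mulVec, he₂₁]
    simp
  have hAstar_eq : Astar = vecMulVec e₂ e₂ := by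
    have hresolve := one_eq_vecMulVec_single_zero_add_vecMulVec_single_one (R := ℝ)
    rw [← he₁, ← he₂] at hresolve
    rw [hAstar, hcontrast, ha, hA₁, hA₂, hresolve, mul_div_cancel_left₀ _ hθ.1.ne']
    module
  have hq : Astar *ᵥ e₁ ⬝ᵥ e₁ = 0 := by
    rw [hAstar_eq, dotProduct_mulVec_vecMulVec_self, he₂₁, sq, zero_mul]
  refine ⟨ha, ha ▸ hθ.1, hq, ?_, not_posDef_of_mulVec_dotProduct_eq_zero ?_ hq⟩
  · simpa [hAstar_eq] using posSemidef_vecMulVec_self_star e₂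
  · simp [he₁]
end
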